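/- arXiv:2005.01466 — 4 statements merged into one kernel-verified Lean document; each statement's English description precedes it below -/
import Mathlib

section
/- Let D be a strongly connected balanced bipartite digraph of order 2a with a ≥ 2 satisfying d(u)+d(v) ≥ 3a+1 for every dominating pair {u,v}. If D is non-Hamiltonian, then for every vertex u ∈ V(D) there exists a vertex v ≠ u such that {u,v} is a dominating pair. -/
open Finset Function

variable {V : Type*}

/-- Out-degree of a vertex in a digraph given by arc relation `A`. -/
noncomputable def outDeg (A : V → V → Prop) (u : V) : ℕ := {v | A u v}.ncard

/-- In-degree of a vertex. -/
noncomputable def inDeg (A : V → V → Prop) (u : V) : ℕ := {v | A v u}.ncard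

/-- Degree `d(u) = d⁺(u) + d⁻(u)`. -/
noncomputable def deg (A : V → V → Prop) (u : V) : ℕ := outDeg A u + inDeg A u

/-- Strong connectedness: a directed path between every ordered pair of vertices. -/
def StronglyConnected (A : V → V → Prop) : Prop :=
  ∀ u v : V, Relation.ReflTransGen A u v

/-- `X, Y` form a bipartition of the digraph `A`. -/
def IsBipartition (A : V → V → Prop) (X Y : Set V) : Prop :=
  Disjoint X Y ∧ X ∪ Y = Set.univ ∧
    ∀ u v, A u v → (u ∈ X ∧ v ∈ Y) ∨ (u ∈ Y ∧ v ∈ X)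

/-- `{u,v}` is a dominating pair: a common out-neighbour exists. -/
def IsDominatingPair (A : V → V → Prop) (u v : V) : Prop :=
  u ≠ v ∧ ∃ w, A u w ∧ A v w

/-- `{u,v}` is a dominated pair: a common in-neighbour exists. -/
def IsDominatedPair (A : V → V → Prop) (u v : V) : Prop :=
  u ≠ v ∧ ∃ w, A w u ∧ A w v

/-- The digraph contains a directed cycle of length `l`. -/
def HasCycleOfLength (A : V → V → Prop) (l : ℕ) : Prop :=
  ∃ f : ZMod l → V, Function.Injective f ∧ ∀ i, A (f i) (f (i + 1))

/-- The digraph contains a Hamiltonian (directed) cycle. -/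
def IsHamiltonian [Fintype V] (A : V → V → Prop) : Prop :=
  ∃ f : ZMod (Fintype.card V) ≃ V, ∀ i, A (f i) (f (i + 1))

/-- The digraph is exactly one directed cycle through all its vertices. -/
def IsDirectedCycleDigraph [Fintype V] (A : V → V → Prop) : Prop :=
  ∃ f : ZMod (Fintype.card V) ≃ V, ∀ u v, A u v ↔ ∃ i, u = f i ∧ v = f (i + 1)

/-- A balanced bipartite digraph of order `2a` is bipancyclic: it has cycles of
all even lengths `2, 4, …, 2a`. -/
def Bipancyclic [Fintype V] (A : V → V → Prop) (a : ℕ) : Prop :=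
  ∀ l, 1 ≤ l → l ≤ a → HasCycleOfLength A (2 * l)

/-- A digraph is pancyclic: cycles of all lengths `2, …, n`. -/
def Pancyclic [Fintype V] (A : V → V → Prop) : Prop :=
  ∀ l, 2 ≤ l → l ≤ Fintype.card V → HasCycleOfLength A l

/-- A cycle factor: a spanning collection of vertex-disjoint directed cycles,
i.e. a permutation `σ` with `v → σ v` an arc for every `v` (in a loopless
digraph all orbits have length `≥ 2`). -/
def HasCycleFactor (A : V → V → Prop) : Prop :=
  ∃ σ : Equiv.Perm V, ∀ v, A v (σ v)

/-- `arcs(S,T) = |A[S,T]| + |A[T,S]|`. -/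
noncomputable def arcsCount (A : V → V → Prop) (S T : Set V) : ℕ :=
  {p : V × V | p.1 ∈ S ∧ p.2 ∈ T ∧ A p.1 p.2}.ncard +
  {p : V × V | p.1 ∈ T ∧ p.2 ∈ S ∧ A p.1 p.2}.ncard

/-!
Suppose `u ∈ X` lies in no dominating pair and put `s = d⁺(u)`, which is positive by strong
connectivity. Every out-neighbour of `u` then has `u` as its only in-neighbour, so its degree is at
most `a + 1`, and the degree condition forbids it to lie in any dominating pair. Counting
neighbourhoods inside `X` and `Y` shows that a vertex lying in a dominating pair has out-degree at
most `a - s` and degree at least `a + s + 2` (in `Y`) or `a + 2s + 1` (in `X`), hence in-degree at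
least `2`; two in-neighbours of a vertex form a dominating pair. So the vertices lying in dominating
pairs form a set closed under in-neighbours that misses `u`; as `u` reaches every vertex, there are
no dominating pairs at all. A strongly connected digraph in which every vertex has exactly one
in-neighbour is a Hamiltonian cycle.
-/

theorem Set.ncard_add_ncard_le_of_disjoint [Finite V] {S T U : Set V} (hST : Disjoint S T)
    (hS : S ⊆ U) (hT : T ⊆ U) : S.ncard + T.ncard ≤ U.ncard := by
  rw [← Set.ncard_union_eq hST]
  exact Set.ncard_le_ncard (Set.union_subset hS hT)

theorem exists_zmod_equiv_of_isCycleOn_univ [Fintype V] [Nonempty V] {σ : Equiv.Perm V}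
    (hσ : σ.IsCycleOn Set.univ) : ∃ f : ZMod (Fintype.card V) ≃ V, ∀ i, f (i + 1) = σ (f i) := by
  obtain ⟨u⟩ := ‹Nonempty V›
  have hpow : ∀ m n : ℕ, (σ ^ m) u = (σ ^ n) u ↔ (m : ZMod (Fintype.card V)) = n := by
    intro m n
    have hσ' : σ.IsCycleOn ((Finset.univ : Finset V) : Set V) := by simpa using hσ
    rw [hσ'.pow_apply_eq_pow_apply (Finset.mem_univ u), Finset.card_univ,
      ZMod.natCast_eq_natCast_iff]
  let f : ZMod (Fintype.card V) → V := fun i => (σ ^ i.val) u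
  have hf : Function.Injective f := fun i j hij => by simpa using (hpow _ _).mp hij
  refine ⟨.ofBijective f ((Fintype.bijective_iff_injective_and_card f).mpr ⟨hf, ZMod.card _⟩),
    fun i => ?_⟩
  change (σ ^ (i + 1).val) u = σ ((σ ^ i.val) u)
  rw [← Equiv.Perm.mul_apply, ← pow_succ', hpow]
  simp

variable {A : V → V → Prop} {a : ℕ} {X Y : Set V} {u v w x x' y y' : V}

theorem IsDominatingPair.symm (h : IsDominatingPair A v w) : IsDominatingPair A w v :=
  let ⟨hvw, z, hv, hw⟩ := h
  ⟨hvw.symm, z, hw, hv⟩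

theorem inDeg_le_one_of_arc [Finite V] (hv : ∀ w, ¬ IsDominatingPair A v w) (hvx : A v x) :
    inDeg A x ≤ 1 := by
  by_contra! h
  obtain ⟨w, hwx, hwv⟩ := Set.exists_ne_of_one_lt_ncard h v
  exact hv w ⟨hwv.symm, x, hvx, hwx⟩

theorem Relation.ReflTransGen.sameCycle {σ : Equiv.Perm V} (hσ : ∀ p q, A p q → σ p = q)
    (h : Relation.ReflTransGen A v w) : σ.SameCycle v w := by
  induction h with
  | refl => exact .refl σ v
  | tail _ hxy ih => exact hσ _ _ hxy ▸ ih.apply_right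

namespace StronglyConnected

theorem exists_arc_from [Nontrivial V] (hsc : StronglyConnected A) (v : V) : ∃ w, A v w := by
  obtain ⟨x, hx⟩ := exists_ne v
  rcases (hsc v x).cases_head with h | ⟨w, hw, -⟩
  · exact absurd h.symm hx
  · exact ⟨w, hw⟩

theorem exists_arc_to [Nontrivial V] (hsc : StronglyConnected A) (v : V) : ∃ w, A w v := by
  obtain ⟨x, hx⟩ := exists_ne v
  rcases (hsc x v).cases_tail with h | ⟨w, -, hw⟩
  · exact absurd h.symm hx
  · exact ⟨w, hw⟩

theorem isHamiltonian_of_forall_not_isDominatingPair [Fintype V] [Nontrivial V] (hsc : StronglyConnected A)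
    (hA : ∀ v w, ¬ IsDominatingPair A v w) : IsHamiltonian A := by
  choose pred hpred using hsc.exists_arc_to
  have hunique : ∀ p q, A p q → pred q = p := fun p q hpq => by
    by_contra hne
    exact hA _ _ ⟨hne, q, hpred q, hpq⟩
  have hsurj : Function.Surjective pred := fun p =>
    let ⟨w, hw⟩ := hsc.exists_arc_from p
    ⟨w, hunique p w hw⟩
  let σ : Equiv.Perm V := (Equiv.ofBijective pred hsurj.bijective_of_finite).symm
  have hσ : ∀ p q, A p q → σ p = q := fun p q hpq =>
    (Equiv.symm_apply_eq _).mpr (hunique p q hpq).symm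
  have hcyc : σ.IsCycleOn Set.univ :=
    ⟨σ.bijective.bijOn_univ, fun x _ y _ => (hsc x y).sameCycle hσ⟩
  have hσarc : ∀ v, A v (σ v) := fun v => by
    simpa only [σ, Equiv.ofBijective_apply_symm_apply] using hpred (σ v)
  obtain ⟨f, hf⟩ := exists_zmod_equiv_of_isCycleOn_univ hcyc
  exact ⟨f, fun i => hf i ▸ hσarc (f i)⟩

end StronglyConnected

namespace IsBipartition

theorem symm (h : IsBipartition A X Y) : IsBipartition A Y X :=
  ⟨h.1.symm, by rw [Set.union_comm, h.2.1], fun p q hpq => (h.2.2 p q hpq).symm⟩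

theorem mem_or_mem (h : IsBipartition A X Y) (v : V) : v ∈ X ∨ v ∈ Y := by
  rw [← Set.mem_union, h.2.1]
  trivial

theorem notMem_right (h : IsBipartition A X Y) (hv : v ∈ X) : v ∉ Y :=
  Set.disjoint_left.mp h.1 hv

theorem mem_right_of_arc_from (h : IsBipartition A X Y) (hvw : A v w) (hv : v ∈ X) : w ∈ Y :=
  ((h.2.2 v w hvw).resolve_right fun h' => h.notMem_right hv h'.1).2

theorem mem_right_of_arc_to (h : IsBipartition A X Y) (hvw : A v w) (hw : w ∈ X) : v ∈ Y :=
  ((h.2.2 v w hvw).resolve_left fun h' => h.notMem_right hw h'.2).1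

theorem mem_of_isDominatingPair (h : IsBipartition A X Y) (hvw : IsDominatingPair A v w)
    (hv : v ∈ X) : w ∈ X := by
  obtain ⟨-, z, hvz, hwz⟩ := hvw
  exact h.symm.mem_right_of_arc_to hwz (h.mem_right_of_arc_from hvz hv)

variable [Finite V]

theorem outDeg_le (h : IsBipartition A X Y) (hv : v ∈ X) : outDeg A v ≤ Y.ncard :=
  Set.ncard_le_ncard fun _ hw => h.mem_right_of_arc_from hw hv

theorem inDeg_le (h : IsBipartition A X Y) (hv : v ∈ X) : inDeg A v ≤ Y.ncard :=
  Set.ncard_le_ncard fun _ hw => h.mem_right_of_arc_to hw hv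

theorem deg_le_two_mul (h : IsBipartition A X Y) (hv : v ∈ X) : deg A v ≤ 2 * Y.ncard := by
  have := h.outDeg_le hv
  have := h.inDeg_le hv
  unfold deg
  omega

end IsBipartition

structure NoDominatingPartner (A : V → V → Prop) (a : ℕ) (X Y : Set V) (u : V) : Prop where
  bip : IsBipartition A X Y
  ncard_left : X.ncard = a
  ncard_right : Y.ncard = a
  two_le : 2 ≤ a
  stronglyConnected : StronglyConnected A
  deg_add_deg : ∀ v w, IsDominatingPair A v w → 3 * a + 1 ≤ deg A v + deg A w
  mem_left : u ∈ X
  not_isDominatingPair : ∀ w, ¬ IsDominatingPair A u w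

namespace NoDominatingPartner

theorem nontrivial (h : NoDominatingPartner A a X Y u) : Nontrivial V := by
  obtain ⟨y, hy⟩ := Set.nonempty_of_ncard_ne_zero (by have := h.two_le; rw [h.ncard_right]; omega)
  exact ⟨⟨u, y, fun huy => h.bip.notMem_right h.mem_left (huy ▸ hy)⟩⟩

theorem exists_arc (h : NoDominatingPartner A a X Y u) (v : V) : ∃ w, A v w :=
  haveI := h.nontrivial
  h.stronglyConnected.exists_arc_from v

variable [Finite V]

theorem one_le_outDeg (h : NoDominatingPartner A a X Y u) : 1 ≤ outDeg A u :=
  (Set.ncard_pos).mpr (h.exists_arc u)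

theorem deg_le_of_arc (h : NoDominatingPartner A a X Y u) (hw : A u w) : deg A w ≤ a + 1 := by
  have hout := h.bip.symm.outDeg_le (h.bip.mem_right_of_arc_from hw h.mem_left)
  have hin := inDeg_le_one_of_arc h.not_isDominatingPair hw
  rw [h.ncard_left] at hout
  unfold deg
  omega

theorem arc_of_two_mul_le_deg (h : NoDominatingPartner A a X Y u) (hy : y ∈ Y)
    (hdeg : 2 * a ≤ deg A y) : A u y := by
  have hout := h.bip.symm.outDeg_le hy
  rw [h.ncard_left] at hout
  have hin : {v | A v y} = X := by
    refine Set.eq_of_subset_of_ncard_le (fun v hv => h.bip.symm.mem_right_of_arc_to hv hy) ?_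
    rw [h.ncard_left]
    unfold deg at hdeg
    exact (show a ≤ inDeg A y by omega)
  change u ∈ {v | A v y}
  rw [hin]
  exact h.mem_left

/-- An out-neighbour of `u` has degree at most `a + 1`, which forces any partner of it to have
degree at least `2a`, hence to be an out-neighbour of `u` as well. -/
theorem not_arc_of_isDominatingPair (h : NoDominatingPartner A a X Y u)
    (hd : IsDominatingPair A y y') : ¬ A u y := by
  intro huy
  have hy := h.bip.mem_right_of_arc_from huy h.mem_left
  have hy' := h.bip.symm.mem_of_isDominatingPair hd hy
  have hsum := h.deg_add_deg y y' hd
  have hdy := h.deg_le_of_arc huy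
  have hdy' := h.deg_le_of_arc (h.arc_of_two_mul_le_deg hy' (by omega))
  have := h.two_le
  omega

theorem injOn_arc (h : NoDominatingPartner A a X Y u) {c : V → V} (hc : ∀ v, A v (c v)) :
    Set.InjOn c {w | A u w} := by
  intro w₁ hw₁ w₂ _ hc₁₂
  by_contra hne
  exact h.not_arc_of_isDominatingPair ⟨hne, c w₁, hc w₁, hc₁₂ ▸ hc w₂⟩ hw₁

/-- Choosing an out-neighbour `c w` of each `w ∈ N⁺(u)` embeds `N⁺(u)` into `X \ N⁺(y)`. -/
theorem outDeg_add_outDeg_le_of_not_arc (h : NoDominatingPartner A a X Y u) (hy : y ∈ Y)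
    (huy : ¬ A u y) : outDeg A y + outDeg A u ≤ a := by
  choose c hc using h.exists_arc
  have hdisj : Disjoint {x | A y x} (c '' {w | A u w}) := by
    refine Set.disjoint_right.mpr ?_
    rintro _ ⟨w, huw, rfl⟩ hyc
    have hwy : w ≠ y := fun hwy => huy (hwy ▸ huw)
    exact h.not_arc_of_isDominatingPair ⟨hwy, c w, hc w, hyc⟩ huw
  have hsub : c '' {w | A u w} ⊆ X := by
    rintro _ ⟨w, huw, rfl⟩
    exact h.bip.symm.mem_right_of_arc_from (hc w) (h.bip.mem_right_of_arc_from huw h.mem_left)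
  have := Set.ncard_add_ncard_le_of_disjoint hdisj
    (fun x hx => h.bip.symm.mem_right_of_arc_from hx hy) hsub
  rwa [(h.injOn_arc hc).ncard_image, h.ncard_left] at this

theorem outDeg_add_outDeg_le_of_mem_left (h : NoDominatingPartner A a X Y u) (hv : v ∈ X)
    (hvu : v ≠ u) : outDeg A v + outDeg A u ≤ a := by
  have hdisj : Disjoint {w | A v w} {w | A u w} :=
    Set.disjoint_left.mpr fun w hvw huw => h.not_isDominatingPair v ⟨hvu.symm, w, huw, hvw⟩
  have := Set.ncard_add_ncard_le_of_disjoint hdisj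
    (fun w hw => h.bip.mem_right_of_arc_from hw hv)
    (fun w hw => h.bip.mem_right_of_arc_from hw h.mem_left)
  rwa [h.ncard_right] at this

theorem le_deg_of_isDominatingPair_of_mem_right (h : NoDominatingPartner A a X Y u)
    (hy : y ∈ Y) (hd : IsDominatingPair A y y') : a + outDeg A u + 2 ≤ deg A y := by
  have hy' := h.bip.symm.mem_of_isDominatingPair hd hy
  have hout := h.outDeg_add_outDeg_le_of_not_arc hy' (h.not_arc_of_isDominatingPair hd.symm)
  have hin : inDeg A y' ≤ (X \ {u}).ncard := by
    refine Set.ncard_le_ncard fun v hv => ⟨h.bip.symm.mem_right_of_arc_to hv hy', ?_⟩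
    rintro rfl
    exact h.not_arc_of_isDominatingPair hd.symm hv
  rw [Set.ncard_sdiff_singleton_of_mem h.mem_left, h.ncard_left] at hin
  have hsum := h.deg_add_deg y y' hd
  have := h.two_le
  unfold deg at *
  omega

theorem le_deg_of_isDominatingPair_of_mem_left (h : NoDominatingPartner A a X Y u)
    (hx : x ∈ X) (hd : IsDominatingPair A x x') : a + 2 * outDeg A u + 1 ≤ deg A x := by
  have hx' := h.bip.mem_of_isDominatingPair hd hx
  have hx'u : x' ≠ u := by
    rintro rfl
    exact h.not_isDominatingPair x hd.symm
  have hout := h.outDeg_add_outDeg_le_of_mem_left hx' hx'u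
  have hsum := h.deg_add_deg x x' hd
  have hdeg := h.bip.deg_le_two_mul hx
  rw [h.ncard_right] at hdeg
  have hs := h.one_le_outDeg
  by_cases hfed : ∃ w, A u w ∧ A w x'
  · obtain ⟨w, huw, hwx'⟩ := hfed
    have hin := inDeg_le_one_of_arc
      (fun w' hd' => h.not_arc_of_isDominatingPair hd' huw) hwx'
    unfold deg at *
    omega
  · have hdisj : Disjoint {w | A w x'} {w | A u w} :=
      Set.disjoint_left.mpr fun w hwx' huw => hfed ⟨w, huw, hwx'⟩
    have hin := Set.ncard_add_ncard_le_of_disjoint hdisj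
      (fun w hw => h.bip.mem_right_of_arc_to hw hx')
      (fun w hw => h.bip.mem_right_of_arc_from hw h.mem_left)
    rw [h.ncard_right] at hin
    unfold deg inDeg outDeg at *
    omega

theorem two_le_inDeg_of_isDominatingPair (h : NoDominatingPartner A a X Y u)
    (hd : IsDominatingPair A v w) : 2 ≤ inDeg A v := by
  have hs := h.one_le_outDeg
  rcases h.bip.mem_or_mem v with hv | hv
  · have hvu : v ≠ u := by
      rintro rfl
      exact h.not_isDominatingPair w hd
    have := h.outDeg_add_outDeg_le_of_mem_left hv hvu
    have := h.le_deg_of_isDominatingPair_of_mem_left hv hd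
    unfold deg at *
    omega
  · have := h.outDeg_add_outDeg_le_of_not_arc hv (h.not_arc_of_isDominatingPair hd)
    have := h.le_deg_of_isDominatingPair_of_mem_right hv hd
    unfold deg at *
    omega

theorem exists_isDominatingPair_of_arc (h : NoDominatingPartner A a X Y u) (hvx : A v x)
    (hx : IsDominatingPair A x w) : ∃ w', IsDominatingPair A v w' := by
  by_contra! hv
  have := inDeg_le_one_of_arc hv hvx
  have := h.two_le_inDeg_of_isDominatingPair hx
  omega

/-- Vertices lying in dominating pairs are closed under in-neighbours and `u` is not one of them;
since `u` reaches every vertex, there are none. -/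
theorem forall_not_isDominatingPair (h : NoDominatingPartner A a X Y u) (v w : V) :
    ¬ IsDominatingPair A v w := by
  suffices ∀ x, Relation.ReflTransGen A u x → (∃ w, IsDominatingPair A x w) →
      ∃ w, IsDominatingPair A u w by
    intro hd
    obtain ⟨w', hw'⟩ := this v (h.stronglyConnected u v) ⟨w, hd⟩
    exact h.not_isDominatingPair w' hw'
  intro x hux
  induction hux with
  | refl => exact id
  | tail _ hbc ih =>
    rintro ⟨w, hd⟩
    exact ih (h.exists_isDominatingPair_of_arc hbc hd)

theorem isHamiltonian [Fintype V] (h : NoDominatingPartner A a X Y u) : IsHamiltonian A :=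
  haveI := h.nontrivial
  h.stronglyConnected.isHamiltonian_of_forall_not_isDominatingPair h.forall_not_isDominatingPair

end NoDominatingPartner

theorem stmt_4_general {V : Type*} [Fintype V] (A : V → V → Prop) (a : ℕ) (X Y : Set V)
    (ha : 2 ≤ a)
    (hbip : IsBipartition A X Y) (hX : X.ncard = a) (hY : Y.ncard = a)
    (hsc : StronglyConnected A)
    (hdeg : ∀ u v : V, IsDominatingPair A u v → 3 * a + 1 ≤ deg A u + deg A v)
    (hnh : ¬ IsHamiltonian A) :
    ∀ u : V, ∃ v : V, v ≠ u ∧ IsDominatingPair A u v := by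
  intro u
  by_contra! hu
  have hno : ∀ w, ¬ IsDominatingPair A u w := fun w hd => hu w hd.1.symm hd
  rcases hbip.mem_or_mem u with huX | huY
  · exact hnh (NoDominatingPartner.isHamiltonian ⟨hbip, hX, hY, ha, hsc, hdeg, huX, hno⟩)
  · exact hnh (NoDominatingPartner.isHamiltonian ⟨hbip.symm, hY, hX, ha, hsc, hdeg, huY, hno⟩)

/-- in a non-Hamiltonian such digraph every vertex belongs to a dominating pair. -/
theorem stmt_4 {V : Type*} [Fintype V] (A : V → V → Prop) (a : ℕ) (X Y : Set V)
    (ha : 2 ≤ a) (hcard : Fintype.card V = 2 * a)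
    (hbip : IsBipartition A X Y) (hX : X.ncard = a) (hY : Y.ncard = a)
    (hsc : StronglyConnected A)
    (hdeg : ∀ u v : V, IsDominatingPair A u v → 3 * a + 1 ≤ deg A u + deg A v)
    (hnh : ¬ IsHamiltonian A) :
    ∀ u : V, ∃ v : V, v ≠ u ∧ IsDominatingPair A u v :=
  stmt_4_general A a X Y ha hbip hX hY hsc hdeg hnh
end

section
/- Let D be a non-Hamiltonian balanced bipartite digraph of order 2a possessing a cycle factor, and let {C₁,…,C_l} be a cycle factor with the minimal number l of cycles. Then the number of arcs between V(C₁) and V(D)∖V(C₁) (in both directions combined) is at most |C₁|(2a−|C₁|)/2. -/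
open Finset Function

variable {V : Type*}

/-!
Write the cycle factor as a permutation `σ` with `v → σ v` an arc for every `v`, and let `S` be
the vertex set of `C₁`. For `x ∈ S` and `y ∉ S` at most one of the arcs `x → σ y`, `y → σ x`
exists: with both, `σ * swap x y` would be a cycle factor in which the cycles through `x` and `y`
are merged into one. Reindexing an arc `x → z` leaving `S` by `z = σ y`, and an arc `y → z`
entering `S` by `z = σ x`, therefore maps the arcs between `S` and `Sᶜ` injectively to pairs
`(x, y) ∈ S × Sᶜ`, and as `σ` swaps the colour classes, `x` and `y` have the same colour. Since
`σ` maps `S ∩ X` onto `S ∩ Y`, both have `|S| / 2` elements, which leaves at most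
`2 · (|S| / 2) · (a - |S| / 2)` such pairs.
-/

open Equiv Equiv.Perm

namespace Equiv.Perm

variable {α : Type*} [Fintype α] [DecidableEq α]

theorem IsCycle.sameCycle_apply_of_eqOn {c g : Perm α} (hc : c.IsCycle) {w : α}
    (hw : w ∈ c.support) (hg : ∀ z ∈ c.support, z ≠ w → g z = c z) {y : α}
    (hy : y ∈ c.support) : g.SameCycle (c w) y := by
  have key : ∀ n : ℕ, g.SameCycle (c w) ((c ^ n) (c w)) := by
    intro n
    induction n with
    | zero => rfl
    | succ n ih =>
      rw [pow_succ', mul_apply]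
      set z := (c ^ n) (c w)
      by_cases hzw : z = w
      · rw [hzw]
      · have hz : z ∈ c.support := by rwa [pow_apply_mem_support, apply_mem_support]
        rw [← hg z hz hzw]
        exact sameCycle_apply_right.mpr ih
  obtain ⟨n, rfl⟩ := (hc.sameCycle (mem_support.mp (apply_mem_support.mpr hw))
    (mem_support.mp hy)).exists_nat_pow_eq
  exact key n

theorem sameCycle_mul_swap {σ c d : Perm α} (hc : c ∈ σ.cycleFactorsFinset)
    (hd : d ∈ σ.cycleFactorsFinset) (hcd : c ≠ d) {u v : α} (hu : u ∈ c.support)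
    (hv : v ∈ d.support) {y : α} (hy : y ∈ c.support ∪ d.support) :
    (σ * swap u v).SameCycle u y := by
  have hsupp :=
    disjoint_iff_disjoint_support.mp (σ.cycleFactorsFinset_pairwise_disjoint hc hd hcd)
  have hvc : v ∉ c.support := Finset.disjoint_right.mp hsupp hv
  have hud : u ∉ d.support := Finset.disjoint_left.mp hsupp hu
  have hτ : ∀ z, z ≠ u → z ≠ v → (σ * swap u v) z = σ z := fun z hzu hzv => by
    simp [swap_apply_of_ne_of_ne hzu hzv]
  have hσc : ∀ z ∈ c.support, c z = σ z := (mem_cycleFactorsFinset_iff.mp hc).2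
  have hσd : ∀ z ∈ d.support, d z = σ z := (mem_cycleFactorsFinset_iff.mp hd).2
  -- `σ * swap u v` runs through `c` up to `u`, jumps into `d` at `σ v`, runs through `d` up to
  -- `v`, and jumps back into `c` at `σ u`.
  have hc_orbit : ∀ y ∈ c.support, (σ * swap u v).SameCycle (σ u) y := fun y hy =>
    hσc u hu ▸ (mem_cycleFactorsFinset_iff.mp hc).1.sameCycle_apply_of_eqOn hu
      (fun z hz hzu => by rw [hτ z hzu (ne_of_mem_of_not_mem hz hvc), hσc z hz]) hy
  have hd_orbit : ∀ y ∈ d.support, (σ * swap u v).SameCycle (σ v) y := fun y hy =>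
    hσd v hv ▸ (mem_cycleFactorsFinset_iff.mp hd).1.sameCycle_apply_of_eqOn hv
      (fun z hz hzv => by rw [hτ z (ne_of_mem_of_not_mem hz hud) hzv, hσd z hz]) hy
  have hu_v : (σ * swap u v).SameCycle u v :=
    sameCycle_apply_left.mp (by simpa using hd_orbit v hv)
  rcases Finset.mem_union.mp hy with hy | hy
  · exact hu_v.trans (sameCycle_apply_left.mp (by simpa using hc_orbit y hy))
  · exact sameCycle_apply_left.mp (by simpa using hd_orbit y hy)

theorem card_cycleFactorsFinset_mul_swap_lt {σ c : Perm α} (hc : c ∈ σ.cycleFactorsFinset)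
    {u v : α} (hu : u ∈ c.support) (hv : v ∈ σ.support) (hvc : v ∉ c.support) :
    (σ * swap u v).cycleFactorsFinset.card < σ.cycleFactorsFinset.card := by
  set d := σ.cycleOf v
  have hd : d ∈ σ.cycleFactorsFinset := cycleOf_mem_cycleFactorsFinset_iff.mpr hv
  have hvd : v ∈ d.support := mem_support_cycleOf_iff.mpr ⟨.rfl, hv⟩
  have hcd : c ≠ d := by rintro rfl; exact hvc hvd
  have hsub : (σ * swap u v).cycleFactorsFinset ⊆
      insert ((σ * swap u v).cycleOf u) ((σ.cycleFactorsFinset.erase c).erase d) := by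
    intro e he
    by_cases hmeet : ∃ y ∈ e.support, y ∈ c.support ∪ d.support
    · obtain ⟨y, hye, hy⟩ := hmeet
      rw [cycle_is_cycleOf hye he, ← (sameCycle_mul_swap hc hd hcd hu hvd hy).cycleOf_eq]
      exact Finset.mem_insert_self _ _
    · simp only [Finset.mem_union, not_exists, not_and, not_or] at hmeet
      have he' := mem_cycleFactorsFinset_iff.mp he
      have heσ : e ∈ σ.cycleFactorsFinset := mem_cycleFactorsFinset_iff.mpr
        ⟨he'.1, fun z hz => by
          rw [he'.2 z hz, mul_apply, swap_apply_of_ne_of_ne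
            (ne_of_mem_of_not_mem hu (hmeet z hz).1).symm
            (ne_of_mem_of_not_mem hvd (hmeet z hz).2).symm]⟩
      refine Finset.mem_insert_of_mem (Finset.mem_erase.mpr ⟨?_, Finset.mem_erase.mpr ⟨?_, heσ⟩⟩)
      · rintro rfl; exact (hmeet v hvd).2 hvd
      · rintro rfl; exact (hmeet u hu).1 hu
  have h2 : 2 ≤ σ.cycleFactorsFinset.card := Finset.one_lt_card.mpr ⟨c, hc, d, hd, hcd⟩
  calc (σ * swap u v).cycleFactorsFinset.card
      ≤ ((σ.cycleFactorsFinset.erase c).erase d).card + 1 :=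
        (Finset.card_le_card hsub).trans (Finset.card_insert_le _ _)
    _ < σ.cycleFactorsFinset.card := by
        rw [Finset.card_erase_of_mem (Finset.mem_erase.mpr ⟨hcd.symm, hd⟩),
          Finset.card_erase_of_mem hc]
        omega

end Equiv.Perm

namespace IsBipartition

variable {A : V → V → Prop} {X Y : Set V}

theorem compl_eq (h : IsBipartition A X Y) : Xᶜ = Y :=
  IsCompl.compl_eq ⟨h.1, codisjoint_iff.mpr h.2.1⟩

theorem mem_iff_notMem (h : IsBipartition A X Y) {u v : V} (huv : A u v) : u ∈ X ↔ v ∉ X := by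
  rw [← Set.mem_compl_iff, h.compl_eq]
  rcases h.2.2 u v huv with ⟨hu, hv⟩ | ⟨hu, hv⟩
  · exact iff_of_true hu hv
  · exact iff_of_false (Set.disjoint_right.mp h.1 hu) (Set.disjoint_left.mp h.1 hv)

theorem ne_of_adj (h : IsBipartition A X Y) {u v : V} (huv : A u v) : u ≠ v := by
  rintro rfl
  exact iff_not_self (h.mem_iff_notMem huv)

theorem apply_mem_iff_notMem (h : IsBipartition A X Y) {f : V → V} (hf : ∀ v, A v (f v))
    (v : V) : f v ∈ X ↔ v ∉ X := by
  rw [h.mem_iff_notMem (hf v), not_not]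

end IsBipartition

section CycleFactor

variable {A : V → V → Prop} {σ : Perm V} {S : Set V}

theorem arcsCount_compl_eq (hS : ∀ x, σ x ∈ S ↔ x ∈ S) :
    arcsCount A S Sᶜ = {p : V × V | p.1 ∈ S ∧ p.2 ∉ S ∧ A p.1 (σ p.2)}.ncard +
      {p : V × V | p.1 ∈ S ∧ p.2 ∉ S ∧ A p.2 (σ p.1)}.ncard := by
  let e₁ : V × V ≃ V × V := (Equiv.refl V).prodCongr σ
  let e₂ : V × V ≃ V × V := (Equiv.prodComm V V).trans e₁
  have h₁ : {p : V × V | p.1 ∈ S ∧ p.2 ∉ S ∧ A p.1 (σ p.2)} =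
      e₁ ⁻¹' {p | p.1 ∈ S ∧ p.2 ∈ Sᶜ ∧ A p.1 p.2} := by
    ext ⟨x, y⟩; simp [e₁, hS]
  have h₂ : {p : V × V | p.1 ∈ S ∧ p.2 ∉ S ∧ A p.2 (σ p.1)} =
      e₂ ⁻¹' {p | p.1 ∈ Sᶜ ∧ p.2 ∈ S ∧ A p.1 p.2} := by
    ext ⟨x, y⟩; simp [e₁, e₂, hS, and_comm, and_left_comm, and_assoc]
  rw [arcsCount, h₁, h₂, Set.ncard_preimage_of_injective_subset_range e₁.injective (by simp),
    Set.ncard_preimage_of_injective_subset_range e₂.injective (by simp)]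

theorem adj_mul_swap_apply [DecidableEq V] (hσ : ∀ v, A v (σ v)) {x y : V} (hxy : A x (σ y))
    (hyx : A y (σ x)) (v : V) : A v ((σ * Equiv.swap x y) v) := by
  rw [mul_apply, swap_apply_def]
  split_ifs with hvx hvy
  · exact hvx ▸ hxy
  · exact hvy ▸ hyx
  · exact hσ v

variable [Finite V] {X Y : Set V}

theorem ncard_inter_eq_ncard_compl_inter (hbip : IsBipartition A X Y) (hσ : ∀ v, A v (σ v))
    (hS : ∀ x, σ x ∈ S ↔ x ∈ S) : (X ∩ S).ncard = (Xᶜ ∩ S).ncard := by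
  have hcol := hbip.apply_mem_iff_notMem hσ
  apply le_antisymm <;> refine Set.ncard_le_ncard_of_injOn σ ?_ σ.injective.injOn
  · exact fun x hx => ⟨(hcol x).not.mpr (not_not.mpr hx.1), (hS x).mpr hx.2⟩
  · exact fun x hx => ⟨(hcol x).mpr hx.1, (hS x).mpr hx.2⟩

theorem arcsCount_compl_le (hbip : IsBipartition A X Y) (hσ : ∀ v, A v (σ v))
    (hS : ∀ x, σ x ∈ S ↔ x ∈ S) (hex : ∀ x ∈ S, ∀ y ∉ S, ¬(A x (σ y) ∧ A y (σ x))) :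
    arcsCount A S Sᶜ ≤ (X ∩ S).ncard * (X \ S).ncard + (Xᶜ ∩ S).ncard * (Xᶜ \ S).ncard := by
  have hcol := hbip.apply_mem_iff_notMem hσ
  have hdisj : Disjoint {p : V × V | p.1 ∈ S ∧ p.2 ∉ S ∧ A p.1 (σ p.2)}
      {p : V × V | p.1 ∈ S ∧ p.2 ∉ S ∧ A p.2 (σ p.1)} :=
    Set.disjoint_left.mpr fun p hp₁ hp₂ => hex p.1 hp₁.1 p.2 hp₁.2.1 ⟨hp₁.2.2, hp₂.2.2⟩
  have hsub : {p : V × V | p.1 ∈ S ∧ p.2 ∉ S ∧ A p.1 (σ p.2)} ∪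
      {p : V × V | p.1 ∈ S ∧ p.2 ∉ S ∧ A p.2 (σ p.1)} ⊆
      (X ∩ S) ×ˢ (X \ S) ∪ (Xᶜ ∩ S) ×ˢ (Xᶜ \ S) := by
    rintro ⟨x, y⟩ hp
    obtain ⟨hx, hy, hxy⟩ : x ∈ S ∧ y ∉ S ∧ (x ∈ X ↔ y ∈ X) := by
      rcases hp with ⟨hx, hy, h⟩ | ⟨hx, hy, h⟩ <;> refine ⟨hx, hy, ?_⟩
      · rw [hbip.mem_iff_notMem h, hcol, not_not]
      · rw [iff_comm, hbip.mem_iff_notMem h, hcol, not_not]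
    by_cases hxX : x ∈ X
    · exact Or.inl ⟨⟨hxX, hx⟩, hxy.mp hxX, hy⟩
    · exact Or.inr ⟨⟨hxX, hx⟩, mt hxy.mpr hxX, hy⟩
  rw [arcsCount_compl_eq hS, ← Set.ncard_union_eq hdisj, ← Set.ncard_prod, ← Set.ncard_prod]
  exact (Set.ncard_le_ncard hsub).trans (Set.ncard_union_le _ _)

theorem two_mul_arcsCount_compl_le {a : ℕ} (hbip : IsBipartition A X Y) (hX : X.ncard = a)
    (hY : Y.ncard = a) (hσ : ∀ v, A v (σ v)) (hS : ∀ x, σ x ∈ S ↔ x ∈ S)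
    (hex : ∀ x ∈ S, ∀ y ∉ S, ¬(A x (σ y) ∧ A y (σ x))) :
    2 * arcsCount A S Sᶜ ≤ S.ncard * (2 * a - S.ncard) := by
  have harcs := arcsCount_compl_le hbip hσ hS hex
  have hbal := ncard_inter_eq_ncard_compl_inter hbip hσ hS
  have hXS : (X ∩ S).ncard + (X \ S).ncard = a := by
    rw [Set.ncard_inter_add_ncard_sdiff_eq_ncard, hX]
  have hYS : (Xᶜ ∩ S).ncard + (Xᶜ \ S).ncard = a := by
    rw [Set.ncard_inter_add_ncard_sdiff_eq_ncard, hbip.compl_eq, hY]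
  have hSX : (X ∩ S).ncard + (Xᶜ ∩ S).ncard = S.ncard := by
    rw [Set.inter_comm, ← Set.sdiff_eq_compl_inter, Set.ncard_inter_add_ncard_sdiff_eq_ncard]
  set k := (X ∩ S).ncard
  have hout : (Xᶜ \ S).ncard = (X \ S).ncard := by omega
  rw [← hbal, hout] at harcs
  rw [← hSX, ← hbal, show 2 * a - (k + k) = 2 * (X \ S).ncard by omega]
  calc 2 * arcsCount A S Sᶜ ≤ 2 * (k * (X \ S).ncard + k * (X \ S).ncard) :=
        Nat.mul_le_mul_left 2 harcs
    _ = (k + k) * (2 * (X \ S).ncard) := by ring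

end CycleFactor

theorem stmt_8_general {V : Type*} [Fintype V] [DecidableEq V] (A : V → V → Prop) (a : ℕ)
    (X Y : Set V)
    (hbip : IsBipartition A X Y) (hX : X.ncard = a) (hY : Y.ncard = a)
    (σ : Equiv.Perm V) (hσ : ∀ v, A v (σ v))
    (hmin : ∀ τ : Equiv.Perm V, (∀ v, A v (τ v)) →
      σ.cycleFactorsFinset.card ≤ τ.cycleFactorsFinset.card)
    (c : Equiv.Perm V) (hc : c ∈ σ.cycleFactorsFinset) :
    2 * arcsCount A (↑c.support : Set V) ((↑c.support : Set V)ᶜ) ≤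
      c.support.card * (2 * a - c.support.card) := by
  set S : Set V := ↑c.support
  have hS : ∀ x, σ x ∈ S ↔ x ∈ S := mem_cycleFactorsFinset_support hc
  have hex : ∀ x ∈ S, ∀ y ∉ S, ¬(A x (σ y) ∧ A y (σ x)) := fun x hx y hy ⟨hxy, hyx⟩ =>
    (card_cycleFactorsFinset_mul_swap_lt hc hx (mem_support.mpr (hbip.ne_of_adj (hσ y)).symm)
      hy).not_ge (hmin _ (adj_mul_swap_apply hσ hxy hyx))
  rw [← Set.ncard_coe_finset]
  exact two_mul_arcsCount_compl_le hbip hX hY hσ hS hex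

/-- bound on the number of arcs between a cycle of a minimal cycle
factor and the rest of the digraph (stated as `2·arcs ≤ |C₁|(2a−|C₁|)`). -/
theorem stmt_8 {V : Type*} [Fintype V] [DecidableEq V] (A : V → V → Prop) (a : ℕ)
    (X Y : Set V) (hcard : Fintype.card V = 2 * a)
    (hbip : IsBipartition A X Y) (hX : X.ncard = a) (hY : Y.ncard = a)
    (hnh : ¬ IsHamiltonian A)
    (σ : Equiv.Perm V) (hσ : ∀ v, A v (σ v))
    (hmin : ∀ τ : Equiv.Perm V, (∀ v, A v (τ v)) →
      σ.cycleFactorsFinset.card ≤ τ.cycleFactorsFinset.card)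
    (c : Equiv.Perm V) (hc : c ∈ σ.cycleFactorsFinset) :
    2 * arcsCount A (↑c.support : Set V) ((↑c.support : Set V)ᶜ) ≤
      c.support.card * (2 * a - c.support.card) :=
  stmt_8_general A a X Y hbip hX hY σ hσ hmin c hc
end

section
/- Let D be a strongly connected balanced bipartite digraph of order 2a (a ≥ 3, k an integer with max{1,a/4} < k ≤ a/2) satisfying: for every dominating pair {u,v}, either d(u) ≥ 2a−k and d(v) ≥ a+k, or d(u) ≥ a+k and d(v) ≥ 2a−k. If D is Hamiltonian but not equal to a single directed cycle of length 2a, then every vertex u of D forms a dominating pair with some other vertex; in particular d(u) ≥ a+k for every vertex u. -/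
open Finset Function

variable {V : Type*}

/-! Every vertex `u` lying in a dominating pair has degree at least `min (a + k) (2a - k) = a + k`;
since its out-degree is at most `a`, its in-degree is at least `k ≥ 2`. A chord of the Hamiltonian
cycle puts its tail in a dominating pair, and if the cycle successor of `u` lies in a dominating
pair, then it has a second in-neighbour besides `u`, which forms a dominating pair with `u`.
Walking backwards around the cycle, every vertex lies in a dominating pair. -/

theorem IsBipartition.outDeg_le_s13 [Finite V] {A : V → V → Prop} {X Y : Set V} {a : ℕ}
    (h : IsBipartition A X Y) (hX : X.ncard = a) (hY : Y.ncard = a) (v : V) :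
    outDeg A v ≤ a := by
  obtain ⟨hdisj, huniv, harc⟩ := h
  have hv : v ∈ X ∪ Y := huniv ▸ Set.mem_univ v
  rcases hv with hvX | hvY
  · refine hY ▸ Set.ncard_le_ncard (fun w hw => ?_) (Set.toFinite Y)
    rcases harc v w hw with ⟨_, hwY⟩ | ⟨hvY, _⟩
    · exact hwY
    · exact absurd rfl (hdisj.ne_of_mem hvX hvY)
  · refine hX ▸ Set.ncard_le_ncard (fun w hw => ?_) (Set.toFinite X)
    rcases harc v w hw with ⟨hvX, _⟩ | ⟨_, hwX⟩
    · exact absurd rfl (hdisj.ne_of_mem hvX hvY)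
    · exact hwX

theorem exists_isDominatingPair_of_one_lt_inDeg {A : V → V → Prop} {u w : V} (huw : A u w)
    (hw : 1 < inDeg A w) : ∃ v, IsDominatingPair A u v := by
  obtain ⟨v, hvw, hvu⟩ := Set.exists_ne_of_one_lt_ncard hw u
  exact ⟨v, hvu.symm, w, huw, hvw⟩

theorem ZMod.forall_of_imp_of_add_one {n : ℕ} [NeZero n] {P : ZMod n → Prop} (i : ZMod n)
    (hi : P i) (hstep : ∀ m, P (m + 1) → P m) (m : ZMod n) : P m := by
  have hsub : ∀ t : ℕ, P (i - t) := by
    intro t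
    induction t with
    | zero => simpa using hi
    | succ t ih => exact hstep _ (by simpa [sub_add_eq_sub_sub] using ih)
  simpa using hsub (i - m).val

theorem exists_chord_of_not_isDirectedCycleDigraph [Fintype V] {A : V → V → Prop}
    {f : ZMod (Fintype.card V) ≃ V} (hf : ∀ i, A (f i) (f (i + 1)))
    (hnc : ¬ IsDirectedCycleDigraph A) : ∃ i j, i ≠ j ∧ A (f i) (f (j + 1)) := by
  by_contra! hno
  refine hnc ⟨f, fun u v => ⟨fun huv => ⟨f.symm u, by simp, ?_⟩, ?_⟩⟩
  · have hj : f.symm u = f.symm v - 1 := by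
      by_contra hne
      exact hno _ _ hne (by simpa using huv)
    simp [hj]
  · rintro ⟨i, rfl, rfl⟩
    exact hf i

theorem IsHamiltonian.exists_isDominatingPair [Fintype V] {A : V → V → Prop}
    (hham : IsHamiltonian A) (hnc : ¬ IsDirectedCycleDigraph A)
    (hin : ∀ u v, IsDominatingPair A u v → 1 < inDeg A u) (u : V) :
    ∃ v, IsDominatingPair A u v := by
  obtain ⟨f, hf⟩ := hham
  have : Nonempty V := ⟨u⟩
  have : NeZero (Fintype.card V) := ⟨Fintype.card_ne_zero⟩
  obtain ⟨i, j, hij, hchord⟩ := exists_chord_of_not_isDirectedCycleDigraph hf hnc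
  have hbase : ∃ v, IsDominatingPair A (f i) v :=
    ⟨f j, f.injective.ne hij, f (j + 1), hchord, hf j⟩
  have hstep : ∀ m, (∃ v, IsDominatingPair A (f (m + 1)) v) → ∃ v, IsDominatingPair A (f m) v :=
    fun m ⟨v, hv⟩ => exists_isDominatingPair_of_one_lt_inDeg (hf m) (hin _ v hv)
  simpa using ZMod.forall_of_imp_of_add_one (P := fun m => ∃ v, IsDominatingPair A (f m) v)
    i hbase hstep (f.symm u)

theorem stmt_13_general {V : Type*} [Fintype V] (A : V → V → Prop) (a k : ℕ) (X Y : Set V)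
    (hk1 : 1 < k) (hk3 : 2 * k ≤ a)
    (hbip : IsBipartition A X Y) (hX : X.ncard = a) (hY : Y.ncard = a)
    (hdeg : ∀ u v : V, IsDominatingPair A u v →
      (2 * a - k ≤ deg A u ∧ a + k ≤ deg A v) ∨
      (a + k ≤ deg A u ∧ 2 * a - k ≤ deg A v))
    (hham : IsHamiltonian A) (hnc : ¬ IsDirectedCycleDigraph A) :
    ∀ u : V, (∃ v : V, IsDominatingPair A u v) ∧ a + k ≤ deg A u := by
  have hdom : ∀ u v, IsDominatingPair A u v → a + k ≤ deg A u := fun u v huv => by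
    rcases hdeg u v huv with ⟨hu, -⟩ | ⟨hu, -⟩ <;> omega
  have hin : ∀ u v, IsDominatingPair A u v → 1 < inDeg A u := fun u v huv => by
    have hu := hdom u v huv
    have hout := hbip.outDeg_le_s13 hX hY u
    unfold deg at hu
    omega
  intro u
  obtain ⟨v, huv⟩ := hham.exists_isDominatingPair hnc hin u
  exact ⟨⟨v, huv⟩, hdom u v huv⟩

/-- if `D` is Hamiltonian but not a single `2a`-cycle, every vertex
belongs to a dominating pair, and hence has degree `≥ a+k`. -/
theorem stmt_13 {V : Type*} [Fintype V] (A : V → V → Prop) (a k : ℕ) (X Y : Set V)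
    (ha : 3 ≤ a) (hk1 : 1 < k) (hk2 : a < 4 * k) (hk3 : 2 * k ≤ a)
    (hcard : Fintype.card V = 2 * a)
    (hbip : IsBipartition A X Y) (hX : X.ncard = a) (hY : Y.ncard = a)
    (hsc : StronglyConnected A)
    (hdeg : ∀ u v : V, IsDominatingPair A u v →
      (2 * a - k ≤ deg A u ∧ a + k ≤ deg A v) ∨
      (a + k ≤ deg A u ∧ 2 * a - k ≤ deg A v))
    (hham : IsHamiltonian A) (hnc : ¬ IsDirectedCycleDigraph A) :
    ∀ u : V, (∃ v : V, IsDominatingPair A u v) ∧ a + k ≤ deg A u :=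
  stmt_13_general A a k X Y hk1 hk3 hbip hX hY hdeg hham hnc
end

section
/- Let D be a balanced bipartite digraph of order 2a with partite sets X and Y, and suppose D has a Hamilton cycle C = [y₁,x₁,…,y_a,x_a] with x_i ∈ X, y_i ∈ Y, such that d⁺(x_i) + d⁻(y_i) ≥ a+2 for every 1 ≤ i ≤ a. Define a digraph G on vertices {v₁,…,v_a} with v_i v_j ∈ A(G) whenever i ≠ j and x_i y_j ∈ A(D). Then G is strongly connected, of order a, and d_G(v_i) ≥ a for every i. -/
open Finset Function

variable {V : Type*}

/-! Because `X = range x` and `Y = range y`, the out-arcs of `x i` and the in-arcs of `y i` in `D`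
are exactly the out- and in-arcs of `i` in the contraction `G`, except possibly the loop at `i`,
which `G` drops; hence `d_G(i) ≥ d⁺(x i) + d⁻(y i) - 2 ≥ a`. The arcs `x i → y (i + 1)` of the
Hamilton cycle give the arcs `i → i + 1` of `G`, so `G` is strongly connected. -/

section Degrees

variable {ι : Type*}

theorem outDeg_le_outDeg_ne_add_one (B : ι → ι → Prop) (i : ι) :
    outDeg B i ≤ outDeg (fun i j => i ≠ j ∧ B i j) i + 1 := by
  have hset : {j | i ≠ j ∧ B i j} = {j | B i j} \ {i} := by
    ext j; simp [and_comm, ne_comm]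
  have := Set.pred_ncard_le_ncard_sdiff_singleton {j | B i j} i
  rw [outDeg, outDeg, hset]
  omega

theorem inDeg_le_inDeg_ne_add_one (B : ι → ι → Prop) (i : ι) :
    inDeg B i ≤ inDeg (fun i j => i ≠ j ∧ B i j) i + 1 := by
  have hset : {j | j ≠ i ∧ B j i} = {j | B j i} \ {i} := by
    ext j; simp [and_comm]
  have := Set.pred_ncard_le_ncard_sdiff_singleton {j | B j i} i
  rw [inDeg, inDeg, hset]
  omega

theorem outDeg_comp_eq {A : V → V → Prop} {x y : ι → V} (hy : Injective y) {i : ι}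
    (hout : ∀ v, A (x i) v → v ∈ Set.range y) :
    outDeg (fun i j => A (x i) (y j)) i = outDeg A (x i) :=
  Set.ncard_preimage_of_injective_subset_range hy hout

theorem inDeg_comp_eq {A : V → V → Prop} {x y : ι → V} (hx : Injective x) {j : ι}
    (hin : ∀ v, A v (y j) → v ∈ Set.range x) :
    inDeg (fun i j => A (x i) (y j)) j = inDeg A (y j) :=
  Set.ncard_preimage_of_injective_subset_range hx hin

end Degrees

theorem IsBipartition.mem_right {A : V → V → Prop} {X Y : Set V}
    (h : IsBipartition A X Y) {u v : V} (hu : u ∈ X) (huv : A u v) : v ∈ Y := by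
  rcases h.2.2 u v huv with ⟨-, hv⟩ | ⟨huY, -⟩
  · exact hv
  · exact absurd huY (Set.disjoint_left.mp h.1 hu)

theorem IsBipartition.mem_left {A : V → V → Prop} {X Y : Set V}
    (h : IsBipartition A X Y) {u v : V} (hv : v ∈ Y) (huv : A u v) : u ∈ X := by
  rcases h.2.2 u v huv with ⟨hu, -⟩ | ⟨-, hvX⟩
  · exact hu
  · exact absurd hv (Set.disjoint_left.mp h.1 hvX)

theorem Set.range_eq_of_injective_of_ncard_le {α ι : Type*} [Finite α] {f : ι → α} {S : Set α}
    (hf : Injective f) (hmem : ∀ i, f i ∈ S) (hS : S.ncard ≤ Nat.card ι) : Set.range f = S :=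
  Set.eq_of_subset_of_ncard_le (Set.range_subset_iff.mpr hmem)
    (by rwa [Set.ncard_range_of_injective hf])

theorem ZMod.stronglyConnected_of_reflGen_succ {n : ℕ} [NeZero n] {R : ZMod n → ZMod n → Prop}
    (hsucc : ∀ u, Relation.ReflGen R u (u + 1)) : StronglyConnected R := by
  have hreach : ∀ (u : ZMod n) (k : ℕ), Relation.ReflTransGen R u (u + k) := by
    intro u k
    induction k with
    | zero => simpa using .refl
    | succ k ih =>
      simpa [add_assoc] using ih.trans (hsucc (u + k)).to_reflTransGen
  intro u v
  simpa using hreach u (v - u).val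

theorem stmt_18_general {V : Type*} [Fintype V] (A : V → V → Prop) (a : ℕ) [NeZero a]
    (X Y : Set V)
    (hbip : IsBipartition A X Y) (hX : X.ncard = a) (hY : Y.ncard = a)
    (x y : ZMod a → V) (hx : ∀ i, x i ∈ X) (hy : ∀ i, y i ∈ Y)
    (hxinj : Function.Injective x) (hyinj : Function.Injective y)
    (hC : ∀ i, A (y i) (x i) ∧ A (x i) (y (i + 1)))
    (hdeg : ∀ i, a + 2 ≤ outDeg A (x i) + inDeg A (y i)) :
    StronglyConnected (fun i j : ZMod a => i ≠ j ∧ A (x i) (y j)) ∧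
    Fintype.card (ZMod a) = a ∧
    (∀ i : ZMod a, a ≤ deg (fun i j : ZMod a => i ≠ j ∧ A (x i) (y j)) i) := by
  have hrangex : Set.range x = X :=
    Set.range_eq_of_injective_of_ncard_le hxinj hx (by simp [hX])
  have hrangey : Set.range y = Y :=
    Set.range_eq_of_injective_of_ncard_le hyinj hy (by simp [hY])
  refine ⟨ZMod.stronglyConnected_of_reflGen_succ fun i => ?_, ZMod.card a, fun i => ?_⟩
  · by_cases hi : i = i + 1
    · rw [← hi]
    · exact .single ⟨hi, (hC i).2⟩
  · have hout : outDeg (fun i j => A (x i) (y j)) i = outDeg A (x i) :=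
      outDeg_comp_eq hyinj fun v huv => hrangey ▸ hbip.mem_right (hx i) huv
    have hin : inDeg (fun i j => A (x i) (y j)) i = inDeg A (y i) :=
      inDeg_comp_eq hxinj fun v hvu => hrangex ▸ hbip.mem_left (hy i) hvu
    have hloopOut := outDeg_le_outDeg_ne_add_one (fun i j => A (x i) (y j)) i
    have hloopIn := inDeg_le_inDeg_ne_add_one (fun i j => A (x i) (y j)) i
    rw [deg]
    linarith [hdeg i]

/-- the contracted digraph `G` is strongly connected of order `a`,
with all degrees `≥ a`. -/
theorem stmt_18 {V : Type*} [Fintype V] (A : V → V → Prop) (a : ℕ) [NeZero a]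
    (X Y : Set V) (hcard : Fintype.card V = 2 * a)
    (hbip : IsBipartition A X Y) (hX : X.ncard = a) (hY : Y.ncard = a)
    (x y : ZMod a → V) (hx : ∀ i, x i ∈ X) (hy : ∀ i, y i ∈ Y)
    (hxinj : Function.Injective x) (hyinj : Function.Injective y)
    (hC : ∀ i, A (y i) (x i) ∧ A (x i) (y (i + 1)))
    (hdeg : ∀ i, a + 2 ≤ outDeg A (x i) + inDeg A (y i)) :
    StronglyConnected (fun i j : ZMod a => i ≠ j ∧ A (x i) (y j)) ∧
    Fintype.card (ZMod a) = a ∧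
    (∀ i : ZMod a, a ≤ deg (fun i j : ZMod a => i ≠ j ∧ A (x i) (y j)) i) :=
  stmt_18_general A a X Y hbip hX hY x y hx hy hxinj hyinj hC hdeg
end
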